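/- arXiv:1312.1469 — 3 statements merged into one kernel-verified Lean document; each statement's English description precedes it below -/
import Mathlib

section
/- Projection Lemma: Let ℋ be a finite-dimensional complex inner product space, let S ⊆ ℋ be a nontrivial linear subspace with orthogonal complement S⊥, and let H₁, H₂ be self-adjoint linear operators on ℋ. Assume that H₂ v = 0 for every v ∈ S, and that ⟨v, H₂ v⟩ ≥ J·‖v‖² for every v ∈ S⊥, where J is a real number with J > 2‖H₁‖ (operator norm). Let λ(A) denote the smallest eigenvalue of a self-adjoint operator A, and let H₁|_S denote the compression of H₁ to S (i.e., the operator v ↦ P_S H₁ v on S, where P_S is the orthogonal projection onto S). Then λ(H₁|_S) − ‖H₁‖²/(J − 2‖H₁‖) ≤ λ(H₁ + H₂) ≤ λ(H₁|_S). -/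
open scoped InnerProductSpace

/-!
Write a unit minimiser `u` of `H₁ + H₂` as `u = p + t` with `p ∈ S`, `t ∈ Sᗮ`. Since `H₂` kills `S`
and is self-adjoint, `⟪u, (H₁ + H₂) u⟫` is at least
`λ(H₁|_S) ‖p‖² - 2‖H₁‖‖p‖‖t‖ - ‖H₁‖‖t‖² + J‖t‖²`; with `‖p‖² + ‖t‖² = 1` and `λ(H₁|_S) ≤ ‖H₁‖`
this is at least `λ(H₁|_S) + (J - 2‖H₁‖)‖t‖² - 2‖H₁‖‖t‖`, whose minimum over `‖t‖` is the claimed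
lower bound. The upper bound is the variational principle at a unit eigenvector of `H₁|_S`,
on which `H₁ + H₂` and `H₁` have the same quadratic form.
-/

/-- The smallest eigenvalue of an operator `A`. -/
noncomputable def smallestEig {H : Type*} [NormedAddCommGroup H]
    [InnerProductSpace ℂ H] (A : H →L[ℂ] H) : ℝ :=
  sInf {μ : ℝ | ∃ v : H, v ≠ 0 ∧ A v = (μ : ℂ) • v}

/-- The compression `H₁|_S` of an operator to a subspace `S`: `v ↦ P_S (H₁ v)` for `v ∈ S`,
where `P_S` is the orthogonal projection onto `S`. -/
noncomputable def compress {H : Type*} [NormedAddCommGroup H] [InnerProductSpace ℂ H]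
    [FiniteDimensional ℂ H] (S : Submodule ℂ H) (A : H →L[ℂ] H) : S →L[ℂ] S :=
  (S.orthogonalProjectionOnto).comp (A.comp S.subtypeL)

section smallestEig

variable {E : Type*} [NormedAddCommGroup E] [InnerProductSpace ℂ E]

lemma abs_re_inner_apply_le (A : E →L[ℂ] E) (x y : E) :
    |(⟪x, A y⟫_ℂ).re| ≤ ‖A‖ * ‖x‖ * ‖y‖ :=
  calc |(⟪x, A y⟫_ℂ).re| ≤ ‖x‖ * ‖A y‖ := (Complex.abs_re_le_norm _).trans (norm_inner_le_norm _ _)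
    _ ≤ ‖x‖ * (‖A‖ * ‖y‖) := by gcongr; exact A.le_opNorm y
    _ = ‖A‖ * ‖x‖ * ‖y‖ := by ring

lemma re_inner_apply_eq_of_apply_eq_smul {A : E →L[ℂ] E} {μ : ℝ} {v : E}
    (hv : A v = (μ : ℂ) • v) : (⟪v, A v⟫_ℂ).re = μ * ‖v‖ ^ 2 := by
  rw [hv, inner_smul_right, inner_self_eq_norm_sq_to_K]
  norm_cast
  exact Complex.re_ofReal_mul _ _

lemma IsSelfAdjoint.re_inner_add_apply_add [CompleteSpace E] {A : E →L[ℂ] E}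
    (hA : IsSelfAdjoint A) (x y : E) :
    (⟪x + y, A (x + y)⟫_ℂ).re =
      (⟪x, A x⟫_ℂ).re + 2 * (⟪x, A y⟫_ℂ).re + (⟪y, A y⟫_ℂ).re := by
  have hyx : (⟪y, A x⟫_ℂ).re = (⟪x, A y⟫_ℂ).re := by
    have hsymm : ⟪A x, y⟫_ℂ = ⟪x, A y⟫_ℂ := hA.isSymmetric x y
    rw [← hsymm, ← inner_conj_symm, Complex.conj_re]
  simp only [map_add, inner_add_left, inner_add_right, Complex.add_re, hyx]
  ring

lemma ContinuousLinearMap.rayleighQuotient_eq_re_inner_div (A : E →L[ℂ] E) (x : E) :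
    A.rayleighQuotient x = (⟪x, A x⟫_ℂ).re / ‖x‖ ^ 2 := by
  rw [ContinuousLinearMap.rayleighQuotient, ContinuousLinearMap.reApplyInnerSelf_apply,
    inner_re_symm]
  rfl

lemma ContinuousLinearMap.bddBelow_rayleighQuotient (A : E →L[ℂ] E) :
    BddBelow (Set.range fun x : {x : E // x ≠ 0} ↦ A.rayleighQuotient x) :=
  ⟨-‖A‖, by rintro _ ⟨x, rfl⟩; exact (abs_le.1 (A.rayleighQuotient_le_norm x)).1⟩

variable [FiniteDimensional ℂ E] {A : E →L[ℂ] E}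

lemma IsSelfAdjoint.isLeast_iInf_rayleighQuotient [Nontrivial E] (hA : IsSelfAdjoint A) :
    IsLeast {μ : ℝ | ∃ v : E, v ≠ 0 ∧ A v = (μ : ℂ) • v}
      (⨅ x : {x : E // x ≠ 0}, A.rayleighQuotient x) := by
  refine ⟨?_, ?_⟩
  · obtain ⟨v, hv⟩ :=
      hA.isSymmetric.hasEigenvalue_iInf_of_finiteDimensional.exists_hasEigenvector
    exact ⟨v, hv.2, hv.apply_eq_smul⟩
  · rintro μ ⟨v, hv0, hv⟩
    have hnorm : 0 < ‖v‖ ^ 2 := by positivity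
    have hμ : A.rayleighQuotient v = μ := by
      rw [A.rayleighQuotient_eq_re_inner_div, re_inner_apply_eq_of_apply_eq_smul hv,
        mul_div_cancel_right₀ _ hnorm.ne']
    exact hμ ▸ ciInf_le A.bddBelow_rayleighQuotient ⟨v, hv0⟩

lemma IsSelfAdjoint.smallestEig_eq_iInf_rayleighQuotient [Nontrivial E] (hA : IsSelfAdjoint A) :
    smallestEig A = ⨅ x : {x : E // x ≠ 0}, A.rayleighQuotient x :=
  hA.isLeast_iInf_rayleighQuotient.csInf_eq

lemma IsSelfAdjoint.smallestEig_mul_norm_sq_le (hA : IsSelfAdjoint A) (w : E) :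
    smallestEig A * ‖w‖ ^ 2 ≤ (⟪w, A w⟫_ℂ).re := by
  rcases eq_or_ne w 0 with rfl | hw
  · simp
  have : Nontrivial E := ⟨w, 0, hw⟩
  have hle := ciInf_le A.bddBelow_rayleighQuotient ⟨w, hw⟩
  rwa [← hA.smallestEig_eq_iInf_rayleighQuotient, A.rayleighQuotient_eq_re_inner_div,
    le_div_iff₀ (by positivity)] at hle

lemma IsSelfAdjoint.exists_norm_eq_one_re_inner_eq_smallestEig [Nontrivial E]
    (hA : IsSelfAdjoint A) : ∃ v : E, ‖v‖ = 1 ∧ (⟪v, A v⟫_ℂ).re = smallestEig A := by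
  obtain ⟨v, hv0, hv⟩ :=
    hA.smallestEig_eq_iInf_rayleighQuotient ▸ hA.isLeast_iInf_rayleighQuotient.1
  have hu : ‖(‖v‖⁻¹ : ℂ) • v‖ = 1 := norm_smul_inv_norm hv0
  refine ⟨(‖v‖⁻¹ : ℂ) • v, hu, ?_⟩
  rw [re_inner_apply_eq_of_apply_eq_smul (by rw [map_smul, hv, smul_comm]), hu, one_pow, mul_one]

lemma IsSelfAdjoint.smallestEig_le_norm [Nontrivial E] (hA : IsSelfAdjoint A) :
    smallestEig A ≤ ‖A‖ := by
  obtain ⟨v, hv, hvA⟩ := hA.exists_norm_eq_one_re_inner_eq_smallestEig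
  simpa [hv, hvA] using (abs_le.1 (abs_re_inner_apply_le A v v)).2

end smallestEig

section compress

variable {H : Type*} [NormedAddCommGroup H] [InnerProductSpace ℂ H] [FiniteDimensional ℂ H]
  (S : Submodule ℂ H)

lemma inner_compress_apply (A : H →L[ℂ] H) (x y : S) :
    ⟪x, compress S A y⟫_ℂ = ⟪(x : H), A y⟫_ℂ :=
  S.inner_orthogonalProjectionOnto_eq_of_mem_left x (A y)

lemma norm_compress_le (A : H →L[ℂ] H) : ‖compress S A‖ ≤ ‖A‖ :=
  calc ‖compress S A‖ ≤ ‖S.orthogonalProjectionOnto‖ * (‖A‖ * ‖S.subtypeL‖) := by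
        grw [compress, ContinuousLinearMap.opNorm_comp_le, ContinuousLinearMap.opNorm_comp_le]
    _ ≤ 1 * (‖A‖ * 1) := by gcongr; exacts [S.orthogonalProjectionOnto_norm_le, S.norm_subtypeL_le]
    _ = ‖A‖ := by ring

lemma IsSelfAdjoint.compress {A : H →L[ℂ] H} (hA : IsSelfAdjoint A) :
    IsSelfAdjoint (_root_.compress S A) := by
  rw [ContinuousLinearMap.isSelfAdjoint_iff_isSymmetric]
  intro x y
  change ⟪_root_.compress S A x, y⟫_ℂ = ⟪x, _root_.compress S A y⟫_ℂ
  rw [← inner_conj_symm, inner_compress_apply, inner_compress_apply, inner_conj_symm]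
  exact hA.isSymmetric _ _

end compress

lemma sub_sq_div_le_of_sq_add_sq_eq_one {lam h J a b : ℝ} (h0 : 0 ≤ h) (hJ : 2 * h < J)
    (hlam : lam ≤ h) (hab : a ^ 2 + b ^ 2 = 1) (hb : 0 ≤ b) :
    lam - h ^ 2 / (J - 2 * h) ≤ lam * a ^ 2 - 2 * h * a * b - h * b ^ 2 + J * b ^ 2 := by
  have hc : 0 < J - 2 * h := by linarith
  have ha : a ≤ 1 := by nlinarith
  have hsq : (J - 2 * h) * b ^ 2 - 2 * h * b + h ^ 2 / (J - 2 * h) =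
      ((J - 2 * h) * b - h) ^ 2 / (J - 2 * h) := by
    field_simp
    ring
  have hquad : -(h ^ 2 / (J - 2 * h)) ≤ (J - 2 * h) * b ^ 2 - 2 * h * b := by
    linarith [div_nonneg (sq_nonneg ((J - 2 * h) * b - h)) hc.le]
  nlinarith [mul_nonneg (mul_nonneg h0 hb) (sub_nonneg.2 ha),
    mul_nonneg (sub_nonneg.2 hlam) (sq_nonneg b)]

section projection

variable {H : Type*} [NormedAddCommGroup H] [InnerProductSpace ℂ H] [FiniteDimensional ℂ H]
  {S : Submodule ℂ H} [Nontrivial S] {H1 H2 : H →L[ℂ] H}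

lemma smallestEig_add_le_smallestEig_compress (h1 : IsSelfAdjoint H1) (h2 : IsSelfAdjoint H2)
    (hker : ∀ v ∈ S, H2 v = 0) : smallestEig (H1 + H2) ≤ smallestEig (compress S H1) := by
  obtain ⟨s, hs, hs_eq⟩ := (h1.compress S).exists_norm_eq_one_re_inner_eq_smallestEig
  calc smallestEig (H1 + H2) ≤ (⟪(s : H), (H1 + H2) s⟫_ℂ).re := by
        simpa [show ‖(s : H)‖ = 1 from hs] using (h1.add h2).smallestEig_mul_norm_sq_le (s : H)
    _ = smallestEig (compress S H1) := by
        rw [add_apply, hker s s.2, add_zero, ← inner_compress_apply, hs_eq]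

lemma smallestEig_compress_sub_le_smallestEig_add (h1 : IsSelfAdjoint H1)
    (h2 : IsSelfAdjoint H2) (hker : ∀ v ∈ S, H2 v = 0) {J : ℝ} (hJ : 2 * ‖H1‖ < J)
    (hgap : ∀ v ∈ Sᗮ, J * ‖v‖ ^ 2 ≤ (⟪v, H2 v⟫_ℂ).re) :
    smallestEig (compress S H1) - ‖H1‖ ^ 2 / (J - 2 * ‖H1‖) ≤ smallestEig (H1 + H2) := by
  have : Nontrivial H := S.injective_subtype.nontrivial
  obtain ⟨u, hu, hu_eq⟩ := (h1.add h2).exists_norm_eq_one_re_inner_eq_smallestEig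
  set lam := smallestEig (compress S H1)
  have hp : S.starProjection u ∈ S := S.starProjection_apply_mem u
  have ht : Sᗮ.starProjection u ∈ Sᗮ := Sᗮ.starProjection_apply_mem u
  have hpt : ‖S.starProjection u‖ ^ 2 + ‖Sᗮ.starProjection u‖ ^ 2 = 1 := by
    rw [← S.norm_sq_eq_add_norm_sq_starProjection, hu, one_pow]
  rw [← S.starProjection_add_starProjection_orthogonal u] at hu_eq
  generalize S.starProjection u = p, Sᗮ.starProjection u = t at hp ht hpt hu_eq
  have hlam : lam ≤ ‖H1‖ := (h1.compress S).smallestEig_le_norm.trans (norm_compress_le S H1)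
  have hH1p : lam * ‖p‖ ^ 2 ≤ (⟪p, H1 p⟫_ℂ).re := by
    have := (h1.compress S).smallestEig_mul_norm_sq_le ⟨p, hp⟩
    rwa [inner_compress_apply] at this
  have hH1pt := (abs_le.1 (abs_re_inner_apply_le H1 p t)).1
  have hH1t := (abs_le.1 (abs_re_inner_apply_le H1 t t)).1
  have hH2 : (⟪p + t, H2 (p + t)⟫_ℂ).re = (⟪t, H2 t⟫_ℂ).re := by
    have hsymm : ⟪H2 p, t⟫_ℂ = ⟪p, H2 t⟫_ℂ := h2.isSymmetric p t
    rw [h2.re_inner_add_apply_add, ← hsymm, hker p hp, inner_zero_left, inner_zero_right]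
    simp only [Complex.zero_re, mul_zero, zero_add]
  calc lam - ‖H1‖ ^ 2 / (J - 2 * ‖H1‖)
      ≤ lam * ‖p‖ ^ 2 - 2 * ‖H1‖ * ‖p‖ * ‖t‖ - ‖H1‖ * ‖t‖ ^ 2 + J * ‖t‖ ^ 2 :=
        sub_sq_div_le_of_sq_add_sq_eq_one (norm_nonneg _) hJ hlam hpt (norm_nonneg _)
    _ ≤ (⟪p + t, H1 (p + t)⟫_ℂ).re + (⟪p + t, H2 (p + t)⟫_ℂ).re := by
        rw [hH2, h1.re_inner_add_apply_add]
        linarith [hgap t ht]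
    _ = smallestEig (H1 + H2) := by rw [← hu_eq, add_apply, inner_add_right, Complex.add_re]

end projection

/-- **Projection Lemma** (Kempe–Kitaev–Regev). -/
theorem projection_lemma {H : Type*} [NormedAddCommGroup H] [InnerProductSpace ℂ H]
    [FiniteDimensional ℂ H]
    (S : Submodule ℂ H) (hS : S ≠ ⊥)
    (H1 H2 : H →L[ℂ] H) (h1 : IsSelfAdjoint H1) (h2 : IsSelfAdjoint H2)
    (hker : ∀ v ∈ S, H2 v = 0)
    (J : ℝ) (hJ : 2 * ‖H1‖ < J)
    (hgap : ∀ v ∈ Sᗮ, J * ‖v‖ ^ 2 ≤ (⟪v, H2 v⟫_ℂ).re) :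
    smallestEig (compress S H1) - ‖H1‖ ^ 2 / (J - 2 * ‖H1‖) ≤ smallestEig (H1 + H2) ∧
      smallestEig (H1 + H2) ≤ smallestEig (compress S H1) := by
  have : Nontrivial S := Submodule.nontrivial_iff_ne_bot.mpr hS
  exact ⟨smallestEig_compress_sub_le_smallestEig_add h1 h2 hker hJ hgap,
    smallestEig_add_le_smallestEig_compress h1 h2 hker⟩
end

section
/- The history state is annihilated by the propagation Hamiltonian: H_prop (Σ_{t=0}^{K} γ_t) = 0. Equivalently, the history state η := (1/√(K+1)) Σ_{t=0}^{K} γ_t is a zero-eigenvalue eigenvector of H_prop whenever φ ≠ 0. -/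
open Matrix Complex
open scoped Kronecker Matrix

/-- The product `U_t ⋯ U_2 U_1` (with `U i` for `i : Fin K` standing for `U_{i+1}`). -/
noncomputable def prodU (d K : ℕ) (U : Fin K → Matrix (Fin d) (Fin d) ℂ) :
    ℕ → Matrix (Fin d) (Fin d) ℂ
  | 0 => 1
  | t + 1 => (if h : t < K then U ⟨t, h⟩ else 1) * prodU d K U t

/-- The state `γ_t := (U_t ⋯ U₁ φ) ⊗ e_t` on `ℂ^d ⊗ ℂ^{K+1}`. -/
noncomputable def gammaVec (d K : ℕ) (U : Fin K → Matrix (Fin d) (Fin d) ℂ)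
    (φ : Fin d → ℂ) (t : Fin (K + 1)) : Fin d × Fin (K + 1) → ℂ :=
  fun p => (prodU d K U t.val *ᵥ φ) p.1 * (if p.2 = t then 1 else 0)

/-- The clock matrix `e_a e_b†` on `ℂ^{K+1}`. -/
noncomputable def clockE (K : ℕ) (a b : Fin (K + 1)) :
    Matrix (Fin (K + 1)) (Fin (K + 1)) ℂ :=
  Matrix.single a b 1

/-- The propagation term
`H_t := I ⊗ (e_t e_t† + e_{t+1} e_{t+1}†) − U_{t+1} ⊗ (e_{t+1} e_t†) − U_{t+1}† ⊗ (e_t e_{t+1}†)`. -/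
noncomputable def Hterm (d K : ℕ) (U : Fin K → Matrix (Fin d) (Fin d) ℂ) (t : Fin K) :
    Matrix (Fin d × Fin (K + 1)) (Fin d × Fin (K + 1)) ℂ :=
  (1 : Matrix (Fin d) (Fin d) ℂ) ⊗ₖ (clockE K t.castSucc t.castSucc + clockE K t.succ t.succ)
    - (U t) ⊗ₖ (clockE K t.succ t.castSucc)
    - (U t)ᴴ ⊗ₖ (clockE K t.castSucc t.succ)

/-- The propagation Hamiltonian `H_prop := Σ_{t=0}^{K−1} H_t`. -/
noncomputable def Hprop (d K : ℕ) (U : Fin K → Matrix (Fin d) (Fin d) ℂ) :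
    Matrix (Fin d × Fin (K + 1)) (Fin d × Fin (K + 1)) ℂ :=
  ∑ t : Fin K, Hterm d K U t

/-!
On the clock slices `t, t+1` the term `H_t` acts as the block matrix `[[1, -U†], [-U, 1]]`,
which kills every pair `(v, U v)` because `U† U = 1`. Consecutive slices of the history state
are such pairs, `U_{t+1} ⋯ U₁ φ = U_{t+1} (U_t ⋯ U₁ φ)`, so each `H_t`, and hence `H_prop`,
annihilates it. It is nonzero when `φ ≠ 0`, since its slice at time `0` is `φ`.
-/

theorem kronecker_single_mulVec {R m n : Type*} [CommSemiring R] [Fintype m] [Fintype n]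
    [DecidableEq n] (A : Matrix m m R) (a b : n) (x : m × n → R) :
    (A ⊗ₖ single a b (1 : R)) *ᵥ x =
      fun p => if a = p.2 then (A *ᵥ fun j => x (j, b)) p.1 else 0 := by
  funext ⟨i, c⟩
  simp only [mulVec, dotProduct, Fintype.sum_prod_type, kroneckerMap_apply, single_apply]
  split_ifs with hac <;> simp [hac]

theorem Hterm_mulVec_eq_zero (d K : ℕ) (U : Fin K → Matrix (Fin d) (Fin d) ℂ) (t : Fin K)
    (hU : star (U t) * U t = 1) (x : Fin d × Fin (K + 1) → ℂ)
    (hx : (fun j => x (j, t.succ)) = U t *ᵥ fun j => x (j, t.castSucc)) :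
    Hterm d K U t *ᵥ x = 0 := by
  have hback : (U t)ᴴ *ᵥ (fun j => x (j, t.succ)) = fun j => x (j, t.castSucc) := by
    rw [hx, mulVec_mulVec, ← star_eq_conjTranspose, hU, one_mulVec]
  funext ⟨i, c⟩
  simp only [Hterm, clockE, kronecker_add, sub_mulVec, add_mulVec, kronecker_single_mulVec,
    one_mulVec, hback, ← hx, Pi.sub_apply, Pi.add_apply, Pi.zero_apply]
  ring

theorem prodU_succ (d K : ℕ) (U : Fin K → Matrix (Fin d) (Fin d) ℂ) (t : Fin K) :
    prodU d K U (t + 1) = U t * prodU d K U t := by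
  rw [prodU, dif_pos t.isLt]

theorem sum_gammaVec (d K : ℕ) (U : Fin K → Matrix (Fin d) (Fin d) ℂ) (φ : Fin d → ℂ) :
    ∑ t : Fin (K + 1), gammaVec d K U φ t = fun p => (prodU d K U p.2 *ᵥ φ) p.1 := by
  funext p
  simp [gammaVec, Finset.sum_apply]

theorem Hprop_mulVec_sum_gammaVec (d K : ℕ) (U : Fin K → Matrix (Fin d) (Fin d) ℂ)
    (hU : ∀ i, U i ∈ unitaryGroup (Fin d) ℂ) (φ : Fin d → ℂ) :
    Hprop d K U *ᵥ ∑ t : Fin (K + 1), gammaVec d K U φ t = 0 := by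
  rw [Hprop, sum_mulVec]
  refine Finset.sum_eq_zero fun t _ => Hterm_mulVec_eq_zero d K U t (hU t).1 _ ?_
  rw [sum_gammaVec]
  funext i
  simp only [Fin.val_succ, Fin.val_castSucc, prodU_succ, mulVec_mulVec]

theorem sum_gammaVec_ne_zero (d K : ℕ) (U : Fin K → Matrix (Fin d) (Fin d) ℂ)
    {φ : Fin d → ℂ} (hφ : φ ≠ 0) : ∑ t : Fin (K + 1), gammaVec d K U φ t ≠ 0 := by
  obtain ⟨i, hi⟩ := Function.ne_iff.mp hφ
  rw [sum_gammaVec]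
  intro h
  apply hi
  simpa [prodU] using congrFun h (i, 0)

theorem Hprop_annihilates_history_general (d K : ℕ)
    (U : Fin K → Matrix (Fin d) (Fin d) ℂ)
    (hU : ∀ i, U i ∈ Matrix.unitaryGroup (Fin d) ℂ)
    (φ : Fin d → ℂ) :
    Hprop d K U *ᵥ (∑ t : Fin (K + 1), gammaVec d K U φ t) = 0 ∧
      (φ ≠ 0 →
        (((Real.sqrt (K + 1) : ℂ))⁻¹ • ∑ t : Fin (K + 1), gammaVec d K U φ t) ≠ 0 ∧
        Hprop d K U *ᵥ
            (((Real.sqrt (K + 1) : ℂ))⁻¹ • ∑ t : Fin (K + 1), gammaVec d K U φ t)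
          = (0 : ℂ) • (((Real.sqrt (K + 1) : ℂ))⁻¹ • ∑ t : Fin (K + 1), gammaVec d K U φ t)) := by
  have hHist := Hprop_mulVec_sum_gammaVec d K U hU φ
  refine ⟨hHist, fun hφ => ⟨?_, ?_⟩⟩
  · have hsqrt : (Real.sqrt (K + 1) : ℂ) ≠ 0 := ofReal_ne_zero.mpr (by positivity)
    exact smul_ne_zero (inv_ne_zero hsqrt) (sum_gammaVec_ne_zero d K U hφ)
  · rw [mulVec_smul, hHist, smul_zero, zero_smul]

/-- The history state `Σ_{t=0}^{K} γ_t` is annihilated by `H_prop`; equivalently, the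
normalized history state `η := (1/√(K+1)) Σ_t γ_t` is a zero-eigenvalue eigenvector of
`H_prop` whenever `φ ≠ 0`. -/
theorem Hprop_annihilates_history (d K : ℕ) (hd : 1 ≤ d) (hK : 1 ≤ K)
    (U : Fin K → Matrix (Fin d) (Fin d) ℂ)
    (hU : ∀ i, U i ∈ Matrix.unitaryGroup (Fin d) ℂ)
    (φ : Fin d → ℂ) :
    Hprop d K U *ᵥ (∑ t : Fin (K + 1), gammaVec d K U φ t) = 0 ∧
      (φ ≠ 0 →
        (((Real.sqrt (K + 1) : ℂ))⁻¹ • ∑ t : Fin (K + 1), gammaVec d K U φ t) ≠ 0 ∧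
        Hprop d K U *ᵥ
            (((Real.sqrt (K + 1) : ℂ))⁻¹ • ∑ t : Fin (K + 1), gammaVec d K U φ t)
          = (0 : ℂ) • (((Real.sqrt (K + 1) : ℂ))⁻¹ • ∑ t : Fin (K + 1), gammaVec d K U φ t)) :=
  Hprop_annihilates_history_general d K U hU φ
end

section
/- Smallest eigenvalue of T_L(1, 1/2): the least eigenvalue of the (L+1)×(L+1) matrix T_L(1, 1/2) equals 1 − cos(π/(2L+3)); moreover 1 − cos(π/(2L+3)) ≥ 2/(2L+3)², so every eigenvalue of T_L(1, 1/2) is at least 2/(2L+3)². -/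
/-!
Let `θ = π / (2L + 3)`. The positive vector `w j = sin ((j + 1) θ)` is an eigenvector of
`T_L(1, 1/2)` for `1 - cos θ`: in the interior this is `sin (x - θ) + sin (x + θ) = 2 cos θ sin x`,
at `j = 0` it uses `sin 0 = 0`, and at `j = L` it uses `sin ((L + 2) θ) = sin ((L + 1) θ)`, which is
where `2L + 3` comes from. A symmetric matrix with nonpositive off-diagonal entries has no
eigenvalue below that of a positive eigenvector `w`: substituting `x = w y`,
`x ⬝ᵥ A x - λ x ⬝ᵥ x = ½ ∑ i j, (-A i j) w i w j (y i - y j)² ≥ 0`.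
Finally `cos x ≤ 1 - 2 x² / π²` on `[-π, π]` gives `1 - cos (π / N) ≥ 2 / N²`.
-/

open Matrix
open scoped Matrix

/-- The `(L+1)×(L+1)` real symmetric tridiagonal matrix `T_L(f,g)` with diagonal entries
`T₀₀ = f`, `T_LL = g`, `T_jj = 1` for `0 < j < L`, off-diagonal entries
`T_{j,j+1} = T_{j+1,j} = −1/2`, and all other entries `0`. -/
noncomputable def triMat (L : ℕ) (f g : ℝ) : Matrix (Fin (L + 1)) (Fin (L + 1)) ℝ :=
  fun i j =>
    if i = j then (if (i : ℕ) = 0 then f else if (i : ℕ) = L then g else 1)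
    else if (i : ℕ) + 1 = (j : ℕ) ∨ (j : ℕ) + 1 = (i : ℕ) then -(1 / 2) else 0

open Real

namespace Matrix.IsSymm

variable {ι : Type*} [Fintype ι] {A : Matrix ι ι ℝ} {w : ι → ℝ} {c : ℝ}

theorem mul_dotProduct_self_le_of_pos_eigenvector (hA : A.IsSymm)
    (hoff : ∀ i j, i ≠ j → A i j ≤ 0) (hw : ∀ i, 0 < w i) (hAw : A *ᵥ w = c • w) (x : ι → ℝ) :
    c * (x ⬝ᵥ x) ≤ x ⬝ᵥ (A *ᵥ x) := by
  set y : ι → ℝ := fun i => x i / w i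
  have hx (i : ι) : x i = w i * y i := (mul_div_cancel₀ _ (hw i).ne').symm
  have hrow (i : ι) : ∑ j, A i j * w j = c * w i := congrFun hAw i
  have hcol (j : ι) : ∑ i, A i j * w i = c * w j := by
    simpa only [hA.apply] using hrow j
  have hleft : ∑ i, ∑ j, y i ^ 2 * w i * (A i j * w j) = c * (x ⬝ᵥ x) := by
    simp_rw [← Finset.mul_sum, hrow, dotProduct, Finset.mul_sum, hx]
    exact Finset.sum_congr rfl fun i _ => by ring
  have hright : ∑ i, ∑ j, y j ^ 2 * w j * (A i j * w i) = c * (x ⬝ᵥ x) := by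
    rw [Finset.sum_comm]
    simp_rw [← Finset.mul_sum, hcol, dotProduct, Finset.mul_sum, hx]
    exact Finset.sum_congr rfl fun i _ => by ring
  have hcross : ∑ i, ∑ j, x i * (A i j * x j) = x ⬝ᵥ (A *ᵥ x) := by
    simp only [dotProduct, mulVec, Finset.mul_sum]
  have hsquares : ∑ i, ∑ j, -A i j * w i * w j * (y i - y j) ^ 2
      = 2 * ∑ i, ∑ j, x i * (A i j * x j) - ∑ i, ∑ j, y i ^ 2 * w i * (A i j * w j)
        - ∑ i, ∑ j, y j ^ 2 * w j * (A i j * w i) := by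
    simp only [Finset.mul_sum, ← Finset.sum_sub_distrib, hx]
    exact Finset.sum_congr rfl fun i _ => Finset.sum_congr rfl fun j _ => by ring
  have hnonneg : 0 ≤ ∑ i, ∑ j, -A i j * w i * w j * (y i - y j) ^ 2 := by
    refine Finset.sum_nonneg fun i _ => Finset.sum_nonneg fun j _ => ?_
    rcases eq_or_ne i j with rfl | hij
    · simp
    · have := (hw i).le
      have := (hw j).le
      have := neg_nonneg.mpr (hoff i j hij)
      positivity
  linarith

theorem le_eigenvalue_of_pos_eigenvector (hA : A.IsSymm) (hoff : ∀ i j, i ≠ j → A i j ≤ 0)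
    (hw : ∀ i, 0 < w i) (hAw : A *ᵥ w = c • w) {μ : ℝ} {v : ι → ℝ} (hv : v ≠ 0)
    (hAv : A *ᵥ v = μ • v) : c ≤ μ := by
  have hle := hA.mul_dotProduct_self_le_of_pos_eigenvector hoff hw hAw v
  rw [hAv, dotProduct_smul, smul_eq_mul] at hle
  have hpos : 0 < v ⬝ᵥ v := by simpa using dotProduct_self_star_pos_iff.mpr hv
  exact le_of_mul_le_mul_right hle hpos

end Matrix.IsSymm

theorem Fin.sum_univ_ite_val_eq {M : Type*} [AddCommMonoid M] (L n : ℕ) (b : M) :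
    ∑ j : Fin L, (if (j : ℕ) = n then b else 0) = if n < L then b else 0 := by
  simp [Fin.sum_univ_eq_sum_range (fun m => if m = n then b else 0)]

section triMat

variable (L : ℕ) (f g : ℝ)

theorem triMat_isSymm : (triMat L f g).IsSymm :=
  Matrix.IsSymm.ext fun i j => by
    simp only [triMat, eq_comm (a := j), or_comm (a := (j : ℕ) + 1 = i)]
    split_ifs <;> first | rfl | (subst_vars; omega)

theorem triMat_apply_nonpos_of_ne {i j : Fin (L + 1)} (hij : i ≠ j) : triMat L f g i j ≤ 0 := by
  simp only [triMat, if_neg hij]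
  split_ifs <;> norm_num

theorem triMat_mulVec_apply (u : ℕ → ℝ) (i : Fin (L + 1)) :
    (triMat L f g *ᵥ fun j => u j) i = triMat L f g i i * u i
      - 1 / 2 * ((if (i : ℕ) = 0 then 0 else u (i - 1))
        + (if (i : ℕ) < L then u (i + 1) else 0)) := by
  set d := triMat L f g i i
  have hsummand (j : Fin (L + 1)) : triMat L f g i j * u j
      = (if (j : ℕ) = i then d * u i else 0)
        + (if (j : ℕ) = i + 1 then -(1 / 2) * u (i + 1) else 0)
        + (if (i : ℕ) = 0 then 0 else if (j : ℕ) = i - 1 then -(1 / 2) * u (i - 1) else 0) := by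
    rcases eq_or_ne i j with rfl | hij
    · split_ifs <;> first | omega | simp [d]
    · have hij' : (i : ℕ) ≠ j := Fin.val_ne_of_ne hij
      simp only [triMat, if_neg hij]
      split_ifs <;> first | omega | simp_all
  simp only [mulVec, dotProduct]
  rw [Finset.sum_congr rfl fun j _ => hsummand j]
  simp only [Finset.sum_add_distrib, Finset.sum_ite_irrel, Finset.sum_const_zero,
    Fin.sum_univ_ite_val_eq]
  split_ifs <;> first | omega | ring

end triMat

section sineEigenvector

variable {L : ℕ} {θ : ℝ}

theorem sin_natCast_add_one_mul_pos (hθ : (2 * L + 3) * θ = π) {n : ℕ} (hn : n ≤ L) :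
    0 < sin ((n + 1) * θ) := by
  have hθpos : 0 < θ := pos_of_mul_pos_right (hθ ▸ pi_pos) (by positivity)
  have hnL : (n : ℝ) ≤ L := by exact_mod_cast hn
  apply sin_pos_of_pos_of_lt_pi (by positivity)
  rw [← hθ]
  exact mul_lt_mul_of_pos_right (by linarith) hθpos

theorem triMat_one_half_mulVec_sin (hL : 1 ≤ L) (hθ : (2 * L + 3) * θ = π) :
    triMat L 1 (1 / 2) *ᵥ (fun j : Fin (L + 1) => sin (((j : ℕ) + 1) * θ))
      = (1 - cos θ) • fun j : Fin (L + 1) => sin (((j : ℕ) + 1) * θ) := by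
  ext i
  refine (triMat_mulVec_apply L 1 (1 / 2) (fun n => sin ((n + 1) * θ)) i).trans ?_
  have hprev : (if (i : ℕ) = 0 then 0 else sin ((((i - 1 : ℕ) : ℝ) + 1) * θ))
      = sin ((i : ℝ) * θ) := by
    split_ifs with hi0
    · simp [hi0]
    · rw [Nat.cast_sub (Nat.one_le_iff_ne_zero.mpr hi0)]
      ring_nf
  have hrec : sin ((i : ℝ) * θ) + sin (((i : ℝ) + 1 + 1) * θ)
      = 2 * cos θ * sin (((i : ℝ) + 1) * θ) := by
    rw [show (i : ℝ) * θ = ((i : ℝ) + 1) * θ - θ by ring,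
      show ((i : ℝ) + 1 + 1) * θ = ((i : ℝ) + 1) * θ + θ by ring, sin_sub, sin_add]
    ring
  simp only [hprev, Pi.smul_apply, smul_eq_mul, Nat.cast_add, Nat.cast_one]
  rcases (Nat.lt_succ_iff.mp i.isLt).lt_or_eq with hiL | hiL
  · have hdiag : triMat L 1 (1 / 2) i i = 1 := by simp [triMat, hiL.ne]
    rw [hdiag, if_pos hiL]
    linear_combination (-1 / 2 : ℝ) * hrec
  · have hdiag : triMat L 1 (1 / 2) i i = 1 / 2 := by simp [triMat, hiL]; omega
    have hrefl : sin (((i : ℝ) + 1 + 1) * θ) = sin (((i : ℝ) + 1) * θ) := by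
      rw [← sin_pi_sub, ← hθ, hiL]
      ring_nf
    rw [hdiag, if_neg hiL.not_lt]
    linear_combination (-1 / 2 : ℝ) * hrec + (1 / 2 : ℝ) * hrefl

end sineEigenvector

theorem two_div_sq_le_one_sub_cos_pi_div {N : ℝ} (hN : 1 ≤ N) : 2 / N ^ 2 ≤ 1 - cos (π / N) := by
  have hπN : |π / N| ≤ π := by
    rw [abs_of_pos (by positivity)]
    exact div_le_self pi_pos.le hN
  have hsq : 2 / π ^ 2 * (π / N) ^ 2 = 2 / N ^ 2 := by field_simp
  linarith [cos_le_one_sub_mul_cos_sq hπN]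

/-- Smallest eigenvalue of `T_L(1, 1/2)`: the least eigenvalue equals `1 − cos(π/(2L+3))`;
moreover `1 − cos(π/(2L+3)) ≥ 2/(2L+3)²`, so every eigenvalue of `T_L(1,1/2)` is at least
`2/(2L+3)²`. -/
theorem triMat_one_half_least_eigenvalue (L : ℕ) (hL : 1 ≤ L) :
    IsLeast {μ : ℝ | ∃ v : Fin (L + 1) → ℝ, v ≠ 0 ∧ triMat L 1 (1 / 2) *ᵥ v = μ • v}
        (1 - Real.cos (Real.pi / (2 * (L : ℝ) + 3))) ∧
      2 / (2 * (L : ℝ) + 3) ^ 2 ≤ 1 - Real.cos (Real.pi / (2 * (L : ℝ) + 3)) ∧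
      ∀ μ ∈ {μ : ℝ | ∃ v : Fin (L + 1) → ℝ, v ≠ 0 ∧ triMat L 1 (1 / 2) *ᵥ v = μ • v},
        2 / (2 * (L : ℝ) + 3) ^ 2 ≤ μ := by
  set θ := π / (2 * (L : ℝ) + 3)
  have hθ : (2 * (L : ℝ) + 3) * θ = π := mul_div_cancel₀ π (by positivity)
  set w : Fin (L + 1) → ℝ := fun j => sin (((j : ℕ) + 1) * θ)
  have hwpos (j : Fin (L + 1)) : 0 < w j :=
    sin_natCast_add_one_mul_pos hθ (Nat.lt_succ_iff.mp j.isLt)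
  have hw : triMat L 1 (1 / 2) *ᵥ w = (1 - cos θ) • w := triMat_one_half_mulVec_sin hL hθ
  have hlower : ∀ μ ∈ {μ : ℝ | ∃ v : Fin (L + 1) → ℝ, v ≠ 0 ∧ triMat L 1 (1 / 2) *ᵥ v = μ • v},
      1 - cos θ ≤ μ := fun μ ⟨v, hv, hAv⟩ =>
    (triMat_isSymm L 1 (1 / 2)).le_eigenvalue_of_pos_eigenvector
      (fun _ _ => triMat_apply_nonpos_of_ne L 1 (1 / 2)) hwpos hw hv hAv
  have hbound : 2 / (2 * (L : ℝ) + 3) ^ 2 ≤ 1 - cos θ :=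
    two_div_sq_le_one_sub_cos_pi_div (by linarith [L.cast_nonneg (α := ℝ)])
  have hw0 : w ≠ 0 := fun h => (hwpos 0).ne' (congrFun h 0)
  exact ⟨⟨⟨w, hw0, hw⟩, hlower⟩, hbound, fun μ hμ => hbound.trans (hlower μ hμ)⟩
end
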